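/- Let F be a field, let n ≥ 2, and fix k ≥ 2. Let t satisfy 2 ≤ t ≤ n and set r = n − t, and assume r < k − 2. Let C = ∑_{i=1}^{t−1} E_{i+1,i} ∈ M_n(F) and let N_C = E_{1,1} + E_{t,1} − E_{1,t+r} − ∑_{i=0}^{r} E_{t,t+i} + ∑_{i=0}^{r−1} E_{t+i+1,t+i}. Then N_C^k = 0 and the matrix C + N_C is invertible; indeed, C + N_C can be transformed by elementary row and column operations (which preserve invertibility) into the companion matrix of the polynomial x^n + x^t + 1, whose constant term is nonzero. -/

import Mathlib

/-!
Index rows and columns from `0`, and let `z j = e₀ + e_{t-1+j}` for `j ≤ r`, `z j = 0` for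
`j > r` (`chainVec`). The columns of `N_C` are `z 0`, zero, or `z (j+1) - z 0`; hence
`N_C (z j) = z (j+1)`, so `N_C ^ (r+1)` kills every `z j` and therefore the range of `N_C`,
and `N_C ^ (r+2) = 0`.

`C + N_C` is the full subdiagonal shift corrected only in rows `0` and `t-1`. If
`(C + N_C) v = 0`, row `b+1` gives `v b = 0` for `b ≤ n-2`, `b ≠ t-2`; row `0` gives
`v 0 = v (n-1)`; row `t-1` then reads `v (t-2) + v 0 - v (n-1) = 0`.
-/

/-- `Eunit F n a b` is the `n × n` matrix unit `E_{a,b}` over `F`, in **1-based**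
indexing: it has a `1` in row `a`, column `b` (`1 ≤ a, b ≤ n`) and `0` elsewhere. -/
def Eunit (F : Type*) [Field F] (n a b : ℕ) : Matrix (Fin n) (Fin n) F :=
  Matrix.of fun i j => if (i : ℕ) + 1 = a ∧ (j : ℕ) + 1 = b then 1 else 0

open Matrix Submodule

namespace Module.End

variable {R M : Type*} [Semiring R] [AddCommMonoid M] [Module R M] {f : Module.End R M}
  {z : ℕ → M}

theorem pow_apply_of_apply_eq_succ (hz : ∀ j, f (z j) = z (j + 1)) (i j : ℕ) :
    (f ^ i) (z j) = z (j + i) := by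
  induction i with
  | zero => rfl
  | succ i ih => rw [pow_succ', mul_apply, ih, hz, add_assoc]

theorem pow_succ_eq_zero_of_range_le_span (hz : ∀ j, f (z j) = z (j + 1)) {m : ℕ}
    (hm : z m = 0) (hrange : LinearMap.range f ≤ span R (Set.range z)) : f ^ (m + 1) = 0 := by
  have hker : span R (Set.range z) ≤ LinearMap.ker (f ^ m) := by
    rw [span_le]
    rintro _ ⟨j, rfl⟩
    rw [SetLike.mem_coe, LinearMap.mem_ker, pow_apply_of_apply_eq_succ hz, add_comm,
      ← pow_apply_of_apply_eq_succ hz, hm, map_zero]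
  rw [pow_succ]
  exact LinearMap.range_le_ker_iff.1 (hrange.trans hker)

end Module.End

theorem Matrix.pow_succ_eq_zero_of_col_mem_span {R ι : Type*} [CommSemiring R] [Fintype ι]
    [DecidableEq ι] {A : Matrix ι ι R} {z : ℕ → ι → R}
    (hz : ∀ j, A *ᵥ z j = z (j + 1)) {m : ℕ} (hm : z m = 0)
    (hcol : ∀ b, A.col b ∈ span R (Set.range z)) : A ^ (m + 1) = 0 := by
  apply toLin'.injective
  rw [toLin'_pow, map_zero]
  refine Module.End.pow_succ_eq_zero_of_range_le_span hz hm ?_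
  rw [toLin'_apply', range_mulVecLin, span_le]
  rintro _ ⟨b, rfl⟩
  exact hcol b

theorem sum_range_Eunit_apply {F : Type*} [Field F] {n : ℕ} (f : ℕ → ℕ) (c m : ℕ)
    (a b : Fin n) :
    (∑ i ∈ Finset.range m, Eunit F n (f i) (c + i)) a b =
      if c ≤ b + 1 ∧ b + 1 < c + m ∧ a + 1 = f (b + 1 - c) then 1 else 0 := by
  rw [Matrix.sum_apply]
  simp only [Eunit, of_apply]
  split_ifs with h
  · rw [Finset.sum_eq_single_of_mem (b + 1 - c) (Finset.mem_range.2 (by omega)),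
      if_pos ⟨h.2.2, by omega⟩]
    intro i _ hi
    rw [if_neg]
    omega
  · refine Finset.sum_eq_zero fun i hi => if_neg ?_
    rintro ⟨h1, h2⟩
    rw [Finset.mem_range] at hi
    exact h ⟨by omega, by omega, by rw [h1]; congr; omega⟩

def jordanBlock (F : Type*) [Zero F] [One F] (n t : ℕ) : Matrix (Fin n) (Fin n) F :=
  Matrix.of fun i j : Fin n => if (i : ℕ) = (j : ℕ) + 1 ∧ (i : ℕ) < t then 1 else 0

def nilpotentPartner (F : Type*) [Field F] (n t r : ℕ) : Matrix (Fin n) (Fin n) F :=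
  Eunit F n 1 1 + Eunit F n t 1 - Eunit F n 1 (t + r)
    - ∑ i ∈ Finset.range (r + 1), Eunit F n t (t + i)
    + ∑ i ∈ Finset.range r, Eunit F n (t + i + 1) (t + i)

def chainVec (F : Type*) [Zero F] [One F] (n t r j : ℕ) : Fin n → F :=
  fun a => if j ≤ r ∧ ((a : ℕ) = 0 ∨ (a : ℕ) + 1 = t + j) then 1 else 0

section

variable {F : Type*} [Field F] {n t r : ℕ}

theorem nilpotentPartner_apply (htr : t + r = n) (a b : Fin n) :
    nilpotentPartner F n t r a b =
      (if (a : ℕ) = 0 ∧ (b : ℕ) = 0 then 1 else 0)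
        + (if (a : ℕ) + 1 = t ∧ (b : ℕ) = 0 then 1 else 0)
        - (if (a : ℕ) = 0 ∧ (b : ℕ) + 1 = n then 1 else 0)
        - (if (a : ℕ) + 1 = t ∧ t ≤ (b : ℕ) + 1 then 1 else 0)
        + (if t ≤ (b : ℕ) + 1 ∧ (a : ℕ) = b + 1 then 1 else 0) := by
  have := a.isLt
  have := b.isLt
  simp only [nilpotentPartner, Matrix.add_apply, Matrix.sub_apply, sum_range_Eunit_apply]
  refine congrArg₂ (· + ·) (congrArg₂ (· - ·) (congrArg₂ (· - ·)
    (congrArg₂ (· + ·) ?_ ?_) ?_) ?_) ?_ <;>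
  exact if_congr (by omega) rfl rfl

theorem nilpotentPartner_col_zero (ht : 2 ≤ t) (htr : t + r = n) (b : Fin n)
    (hb : (b : ℕ) = 0) :
    (nilpotentPartner F n t r).col b = chainVec F n t r 0 := by
  funext a
  simp only [col_apply, nilpotentPartner_apply htr, chainVec]
  split_ifs <;> first | omega | ring1

theorem nilpotentPartner_col_of_lt (htr : t + r = n) (b : Fin n) (hb : (b : ℕ) ≠ 0)
    (hbt : (b : ℕ) + 1 < t) :
    (nilpotentPartner F n t r).col b = 0 := by
  funext a
  simp only [col_apply, nilpotentPartner_apply htr, Pi.zero_apply]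
  split_ifs <;> first | omega | ring1

theorem nilpotentPartner_col_of_le (ht : 2 ≤ t) (htr : t + r = n) (b : Fin n)
    (hbt : t ≤ (b : ℕ) + 1) :
    (nilpotentPartner F n t r).col b =
      chainVec F n t r ((b : ℕ) + 2 - t) - chainVec F n t r 0 := by
  funext a
  have := b.isLt
  simp only [col_apply, nilpotentPartner_apply htr, chainVec, Pi.sub_apply]
  split_ifs <;> first | omega | ring1

theorem chainVec_of_le (ht : 2 ≤ t) (htr : t + r = n) {j : ℕ} (hj : j ≤ r) :
    chainVec F n t r j =
      (Pi.single ⟨0, by omega⟩ 1 + Pi.single ⟨t - 1 + j, by omega⟩ 1 : Fin n → F) := by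
  funext a
  simp only [chainVec, Pi.add_apply, Pi.single_apply, Fin.ext_iff]
  split_ifs <;> first | omega | ring1

theorem chainVec_of_lt {j : ℕ} (hj : r < j) : chainVec F n t r j = (0 : Fin n → F) := by
  funext a
  simp only [chainVec, Pi.zero_apply]
  rw [if_neg (by omega)]

theorem nilpotentPartner_mulVec_chainVec (ht : 2 ≤ t) (htr : t + r = n) (j : ℕ) :
    nilpotentPartner F n t r *ᵥ chainVec F n t r j = chainVec F n t r (j + 1) := by
  rcases le_or_gt j r with hj | hj
  · rw [chainVec_of_le ht htr hj, mulVec_add, mulVec_single_one, mulVec_single_one,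
      nilpotentPartner_col_zero ht htr _ rfl, nilpotentPartner_col_of_le ht htr _ (by simp; omega)]
    simp only [show t - 1 + j + 2 - t = j + 1 by omega, add_sub_cancel]
  · rw [chainVec_of_lt hj, chainVec_of_lt (by omega), mulVec_zero]

theorem nilpotentPartner_col_mem_span (ht : 2 ≤ t) (htr : t + r = n) (b : Fin n) :
    (nilpotentPartner F n t r).col b ∈ span F (Set.range (chainVec F n t r)) := by
  rcases Nat.eq_zero_or_pos b with hb | hb
  · rw [nilpotentPartner_col_zero ht htr b hb]
    exact subset_span ⟨0, rfl⟩
  · rcases lt_or_ge ((b : ℕ) + 1) t with hbt | hbt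
    · rw [nilpotentPartner_col_of_lt htr b hb.ne' hbt]
      exact zero_mem _
    · rw [nilpotentPartner_col_of_le ht htr b hbt]
      exact sub_mem (subset_span ⟨_, rfl⟩) (subset_span ⟨0, rfl⟩)

theorem nilpotentPartner_pow_eq_zero (ht : 2 ≤ t) (htr : t + r = n) :
    nilpotentPartner F n t r ^ (r + 2) = 0 :=
  pow_succ_eq_zero_of_col_mem_span (nilpotentPartner_mulVec_chainVec ht htr)
    (chainVec_of_lt (Nat.lt_succ_self r)) (nilpotentPartner_col_mem_span ht htr)

theorem jordanBlock_add_nilpotentPartner_apply (htr : t + r = n) (a b : Fin n) :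
    (jordanBlock F n t + nilpotentPartner F n t r) a b =
      (if (a : ℕ) = b + 1 then 1 else 0)
        + (if (a : ℕ) = 0 ∧ (b : ℕ) = 0 then 1 else 0)
        + (if (a : ℕ) + 1 = t ∧ (b : ℕ) = 0 then 1 else 0)
        - (if (a : ℕ) = 0 ∧ (b : ℕ) + 1 = n then 1 else 0)
        - (if (a : ℕ) + 1 = t ∧ t ≤ (b : ℕ) + 1 then 1 else 0) := by
  have hsubdiag : (if (a : ℕ) = b + 1 ∧ (a : ℕ) < t then 1 else 0)
      + (if t ≤ (b : ℕ) + 1 ∧ (a : ℕ) = b + 1 then 1 else 0) =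
        (if (a : ℕ) = b + 1 then 1 else (0 : F)) := by
    split_ifs <;> first | omega | ring1
  rw [Matrix.add_apply, nilpotentPartner_apply htr, jordanBlock, of_apply, ← hsubdiag]
  ring

theorem jordanBlock_add_nilpotentPartner_mulVec_apply_of_eq_succ (htr : t + r = n)
    (v : Fin n → F) {a b : Fin n} (hab : (a : ℕ) = b + 1) (hat : (a : ℕ) + 1 ≠ t) :
    ((jordanBlock F n t + nilpotentPartner F n t r) *ᵥ v) a = v b := by
  have hentry : ∀ c,
      (jordanBlock F n t + nilpotentPartner F n t r) a c = if c = b then 1 else 0 := by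
    intro c
    have := a.isLt
    rw [jordanBlock_add_nilpotentPartner_apply htr]
    simp only [Fin.ext_iff]
    split_ifs <;> first | omega | ring1
  simp [mulVec, dotProduct, hentry]

theorem jordanBlock_add_nilpotentPartner_mulVec_apply_of_val_eq_zero (ht : 2 ≤ t)
    (htr : t + r = n) (v : Fin n → F) {a l : Fin n} (ha : (a : ℕ) = 0)
    (hl : (l : ℕ) + 1 = n) :
    ((jordanBlock F n t + nilpotentPartner F n t r) *ᵥ v) a = v a - v l := by
  have hentry : ∀ c, (jordanBlock F n t + nilpotentPartner F n t r) a c =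
      (if c = a then 1 else 0) - if c = l then 1 else 0 := by
    intro c
    rw [jordanBlock_add_nilpotentPartner_apply htr]
    simp only [Fin.ext_iff]
    split_ifs <;> first | omega | ring1
  simp [mulVec, dotProduct, hentry, sub_mul, Finset.sum_sub_distrib]

theorem jordanBlock_add_nilpotentPartner_mulVec_apply_of_succ_eq (htr : t + r = n)
    (v : Fin n → F) {a b z : Fin n} (ha : (a : ℕ) + 1 = t) (hb : (b : ℕ) + 2 = t)
    (hz : (z : ℕ) = 0) :
    ((jordanBlock F n t + nilpotentPartner F n t r) *ᵥ v) a =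
      v b + v z - ∑ c ∈ Finset.univ.filter (fun c : Fin n => t ≤ (c : ℕ) + 1), v c := by
  have hentry : ∀ c : Fin n, (jordanBlock F n t + nilpotentPartner F n t r) a c =
      (if c = b then 1 else 0) + (if c = z then 1 else 0)
        - if t ≤ (c : ℕ) + 1 then 1 else 0 := by
    intro c
    have := c.isLt
    rw [jordanBlock_add_nilpotentPartner_apply htr]
    simp only [Fin.ext_iff]
    split_ifs <;> first | omega | ring1
  simp [mulVec, dotProduct, hentry, add_mul, sub_mul, Finset.sum_add_distrib,
    Finset.sum_sub_distrib, Finset.sum_filter]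

theorem jordanBlock_add_nilpotentPartner_mulVec_injective (ht : 2 ≤ t) (htr : t + r = n) :
    Function.Injective (jordanBlock F n t + nilpotentPartner F n t r).mulVec := by
  set M := jordanBlock F n t + nilpotentPartner F n t r
  suffices h : ∀ v, M *ᵥ v = 0 → v = 0 from
    LinearMap.ker_eq_bot.1 (ker_mulVecLin_eq_bot_iff.2 h)
  intro v hv
  have hrow (a : Fin n) : (M *ᵥ v) a = 0 := by rw [hv]; rfl
  let i0 : Fin n := ⟨0, by omega⟩
  let iT : Fin n := ⟨t - 2, by omega⟩
  let iL : Fin n := ⟨n - 1, by omega⟩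
  have hshift : ∀ c, c ≠ iT → c ≠ iL → v c = 0 := by
    intro c hT hL
    rw [Ne, Fin.ext_iff] at hT hL
    rw [← jordanBlock_add_nilpotentPartner_mulVec_apply_of_eq_succ htr v
      (a := ⟨c + 1, by simp [iL] at hL; omega⟩) rfl (by simp [iT] at hT ⊢; omega)]
    exact hrow _
  have hfirst : v i0 = v iL :=
    sub_eq_zero.1 ((jordanBlock_add_nilpotentPartner_mulVec_apply_of_val_eq_zero ht htr v rfl
      (by simp [iL]; omega)).symm.trans (hrow i0))
  have htail : ∑ c ∈ Finset.univ.filter (fun c : Fin n => t ≤ (c : ℕ) + 1), v c = v iL := by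
    refine Finset.sum_eq_single_of_mem iL (by simp [iL]; omega) fun c hc hcL => hshift c ?_ hcL
    simp [Fin.ext_iff, iT] at hc ⊢
    omega
  have hT : v iT = 0 := by
    have h := hrow ⟨t - 1, by omega⟩
    rw [jordanBlock_add_nilpotentPartner_mulVec_apply_of_succ_eq htr v (b := iT) (z := i0)
      (by simp; omega) (by simp [iT]; omega) rfl, htail, hfirst] at h
    simpa using h
  have hne : ∀ c, c ≠ iL → v c = 0 := fun c hc =>
    if h : c = iT then h ▸ hT else hshift c h hc
  have hL : v iL = 0 := hfirst ▸ hne i0 (by simp [i0, iL, Fin.ext_iff]; omega)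
  funext c
  by_cases hc : c = iL
  · simpa [hc] using hL
  · exact hne c hc

theorem isUnit_jordanBlock_add_nilpotentPartner (ht : 2 ≤ t) (htr : t + r = n) :
    IsUnit (jordanBlock F n t + nilpotentPartner F n t r) :=
  mulVec_injective_iff_isUnit.1 (jordanBlock_add_nilpotentPartner_mulVec_injective ht htr)

end

theorem jordan_block_add_explicit_nilpotent_isUnit_general
    (F : Type*) [Field F] (n k t r : ℕ)
    (ht : 2 ≤ t) (htn : t ≤ n) (hrdef : r = n - t) (hrk : r < k - 2)
    (C : Matrix (Fin n) (Fin n) F)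
    (hC : C = Matrix.of fun i j : Fin n =>
      if (i : ℕ) = (j : ℕ) + 1 ∧ (i : ℕ) < t then 1 else 0)
    (NC : Matrix (Fin n) (Fin n) F)
    (hNC : NC = Eunit F n 1 1 + Eunit F n t 1 - Eunit F n 1 (t + r)
      - ∑ i ∈ Finset.range (r + 1), Eunit F n t (t + i)
      + ∑ i ∈ Finset.range r, Eunit F n (t + i + 1) (t + i)) :
    NC ^ k = 0 ∧ IsUnit (C + NC) := by
  have htr : t + r = n := by omega
  change C = jordanBlock F n t at hC
  change NC = nilpotentPartner F n t r at hNC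
  subst hC hNC
  exact ⟨pow_eq_zero_of_le (by omega) (nilpotentPartner_pow_eq_zero ht htr),
    isUnit_jordanBlock_add_nilpotentPartner ht htr⟩

/-- Let `n ≥ 2`, `k ≥ 2`, `2 ≤ t ≤ n`, `r = n - t` and `r < k - 2`. Let
`C = ∑_{i=1}^{t-1} E_{i+1,i} ∈ Mₙ(F)` be a single nilpotent Jordan block of size `t`
(and zeros elsewhere) and
`N_C = E_{1,1} + E_{t,1} - E_{1,t+r} - ∑_{i=0}^{r} E_{t,t+i} + ∑_{i=0}^{r-1} E_{t+i+1,t+i}`.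
Then `N_C ^ k = 0` and `C + N_C` is invertible (indeed, `C + N_C` can be transformed by
elementary row and column operations into the companion matrix of `x^n + x^t + 1`). -/
theorem jordan_block_add_explicit_nilpotent_isUnit
    (F : Type*) [Field F] (n k t r : ℕ) (hn : 2 ≤ n) (hk : 2 ≤ k)
    (ht : 2 ≤ t) (htn : t ≤ n) (hrdef : r = n - t) (hrk : r < k - 2)
    (C : Matrix (Fin n) (Fin n) F)
    (hC : C = Matrix.of fun i j : Fin n =>
      if (i : ℕ) = (j : ℕ) + 1 ∧ (i : ℕ) < t then 1 else 0)
    (NC : Matrix (Fin n) (Fin n) F)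
    (hNC : NC = Eunit F n 1 1 + Eunit F n t 1 - Eunit F n 1 (t + r)
      - ∑ i ∈ Finset.range (r + 1), Eunit F n t (t + i)
      + ∑ i ∈ Finset.range r, Eunit F n (t + i + 1) (t + i)) :
    NC ^ k = 0 ∧ IsUnit (C + NC) :=
  jordan_block_add_explicit_nilpotent_isUnit_general F n k t r ht htn hrdef hrk C hC NC hNC
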